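/- arXiv:2302.13767 — 2 statements merged into one kernel-verified Lean document; each statement's English description precedes it below -/
import Mathlib

section
/- For n ≥ 0, the number of Fishburn permutations of length n avoiding the classical patterns 321, 3142, and 2143 equals C(n,2) + 1. -/
/-- A permutation `π` of `Fin n` contains the classical pattern `p` (given as a
function `Fin k → ℕ` listing the pattern's entries). -/
def Contains {n k : ℕ} (π : Equiv.Perm (Fin n)) (p : Fin k → ℕ) : Prop :=
  ∃ f : Fin k → Fin n, StrictMono f ∧ ∀ i j, p i < p j ↔ π (f i) < π (f j)

/-- Classical pattern avoidance. -/
def Avoids {n k : ℕ} (π : Equiv.Perm (Fin n)) (p : Fin k → ℕ) : Prop :=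
  ¬ Contains π p

/-- A permutation is Fishburn if there are no indices `i < j` with
`π i, π (i+1), π j` forming a 231 pattern and `π i = π j + 1`. -/
def IsFishburn {n : ℕ} (π : Equiv.Perm (Fin n)) : Prop :=
  ¬ ∃ (i j : ℕ) (hij : i + 1 < j) (hj : j < n),
      π ⟨i, by omega⟩ < π ⟨i + 1, by omega⟩ ∧
      π ⟨j, hj⟩ < π ⟨i, by omega⟩ ∧
      (π ⟨i, by omega⟩ : ℕ) = (π ⟨j, hj⟩ : ℕ) + 1

/-!
A permutation lies in the class exactly when all of its inversions have the same left entry `i`.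
Such a permutation is either the identity or, with `j = π i > i`, the word
`0 ⋯ (i-1) j i (i+1) ⋯ (j-1) (j+1) ⋯ (n-1)`, i.e. the inverse of the cycle `(i i+1 ⋯ j)`;
there are `1 + C(n, 2)` of these.

Conversely, let `π ≠ 1` have first moved point `i`, so `j = π i > i`. If `π (i+1) > j`, the value
`j - 1` sits further right and the Fishburn condition fails; otherwise 321-avoidance forces
`π (i+1) = i`. Then an inversion `(p, q)` with `p > i` yields a 321 through `i` (if `π p < j`), or
a 3142 or 2143 through `i, i+1` (according as `π q < j` or `π q > j`).
-/

open Equiv Finset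

variable {n : ℕ}

theorem Fin.val_cycleIcc {i j : Fin n} (hij : i < j) (k : Fin n) :
    (Fin.cycleIcc i j k : ℕ) = if i ≤ k ∧ k < j then (k : ℕ) + 1 else if k = j then i else k := by
  have := i.neZero
  rcases lt_or_ge k i with hki | hik
  · simp [Fin.cycleIcc_of_lt hki, hki.not_ge, hki.trans hij |>.ne]
  rcases lt_trichotomy k j with hkj | rfl | hjk
  · simp [Fin.cycleIcc_of_ge_of_lt hik hkj, hik, hkj,
      Fin.val_add_one_of_lt' (by omega : (k : ℕ) + 1 < n)]
  · simp [Fin.cycleIcc_of_last hik]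
  · simp [Fin.cycleIcc_of_gt hjk, hjk.not_gt, hjk.ne']

theorem Fin.cycleIcc_injOn :
    Set.InjOn (fun p : Fin n × Fin n => Fin.cycleIcc p.1 p.2) {p | p.1 < p.2} := by
  rintro ⟨i, j⟩ (hij : i < j) ⟨i', j'⟩ (hij' : i' < j') h
  have key (k : Fin n) : (Fin.cycleIcc i j k : ℕ) = Fin.cycleIcc i' j' k :=
    congrArg Fin.val (DFunLike.congr_fun h k)
  have h1 := key i
  have h2 := key i'
  rw [Fin.val_cycleIcc hij, Fin.val_cycleIcc hij'] at h1 h2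
  obtain rfl : i = i' := by
    ext
    split_ifs at h1 h2 <;> omega
  have h3 := key j
  rw [Fin.val_cycleIcc hij, Fin.val_cycleIcc hij'] at h3
  obtain rfl : j = j' := by
    ext
    split_ifs at h3 <;> omega
  rfl

theorem Fin.cycleIcc_ne_one {i j : Fin n} (hij : i < j) : Fin.cycleIcc i j ≠ 1 := by
  intro h
  have := Fin.val_cycleIcc hij i
  simp [h, hij] at this

theorem Equiv.Perm.card_filter_apply_lt (π : Perm (Fin n)) (m : Fin n) :
    #{k | π k < π m} = π m := by
  rw [← Fin.card_Iio (π m)]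
  exact card_equiv π (by simp)

section Patterns

variable {π : Perm (Fin n)} {a b c d : Fin n}

theorem contains_321 (hab : a < b) (hbc : b < c) (hcb : π c < π b) (hba : π b < π a) :
    Contains π ![3, 2, 1] := by
  refine ⟨![a, b, c], Fin.strictMono_iff_lt_succ.2 (by simp [Fin.forall_fin_succ, hab, hbc]), ?_⟩
  simp only [Fin.forall_fin_succ, IsEmpty.forall_iff, Matrix.cons_val_zero, Matrix.cons_val_succ,
    and_true]
  omega

theorem contains_3142 (hab : a < b) (hbc : b < c) (hcd : c < d)
    (hbd : π b < π d) (hda : π d < π a) (hac : π a < π c) : Contains π ![3, 1, 4, 2] := by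
  refine ⟨![a, b, c, d],
    Fin.strictMono_iff_lt_succ.2 (by simp [Fin.forall_fin_succ, hab, hbc, hcd]), ?_⟩
  simp only [Fin.forall_fin_succ, IsEmpty.forall_iff, Matrix.cons_val_zero, Matrix.cons_val_succ,
    and_true]
  omega

theorem contains_2143 (hab : a < b) (hbc : b < c) (hcd : c < d)
    (hba : π b < π a) (had : π a < π d) (hdc : π d < π c) : Contains π ![2, 1, 4, 3] := by
  refine ⟨![a, b, c, d],
    Fin.strictMono_iff_lt_succ.2 (by simp [Fin.forall_fin_succ, hab, hbc, hcd]), ?_⟩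
  simp only [Fin.forall_fin_succ, IsEmpty.forall_iff, Matrix.cons_val_zero, Matrix.cons_val_succ,
    and_true]
  omega

end Patterns

theorem IsFishburn.apply_ne_apply_add_one {π : Perm (Fin n)} (hF : IsFishburn π) {a s b : Fin n}
    (hs : (s : ℕ) = a + 1) (hsb : s < b) (has : π a < π s) (hba : π b < π a) :
    (π a : ℕ) ≠ π b + 1 := by
  have ha : (a : ℕ) + 1 < n := hs ▸ s.isLt
  obtain rfl : s = ⟨a + 1, ha⟩ := Fin.ext hs
  exact fun h => hF ⟨a, b, hsb, b.isLt, has, hba, h⟩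

-- `i : ℕ` rather than `Fin n`, so that the identity qualifies even when `Fin n` is empty.
def HasInversionsOnlyAt (π : Perm (Fin n)) (i : ℕ) : Prop :=
  ∀ ⦃a b : Fin n⦄, a < b → π b < π a → (a : ℕ) = i

theorem hasInversionsOnlyAt_one (i : ℕ) : HasInversionsOnlyAt (1 : Perm (Fin n)) i :=
  fun _ _ hab hba => absurd hab hba.not_gt

theorem hasInversionsOnlyAt_inv_cycleIcc {i j : Fin n} (hij : i < j) :
    HasInversionsOnlyAt (Fin.cycleIcc i j)⁻¹ i := by
  intro a b hab hba
  obtain ⟨x, rfl⟩ := (Fin.cycleIcc i j).surjective a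
  obtain ⟨y, rfl⟩ := (Fin.cycleIcc i j).surjective b
  simp only [Perm.coe_inv, symm_apply_apply] at hba
  have hx := Fin.val_cycleIcc hij x
  have hy := Fin.val_cycleIcc hij y
  split_ifs at hx hy <;> omega

namespace HasInversionsOnlyAt

variable {π : Perm (Fin n)} {i : ℕ}

theorem avoids (h : HasInversionsOnlyAt π i) {k : ℕ} {p : Fin k → ℕ} {a b c d : Fin k}
    (hab : a < b) (hba : p b < p a) (hcd : c < d) (hdc : p d < p c) (hac : a ≠ c) :
    Avoids π p := by
  rintro ⟨f, hf, hp⟩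
  have ha := h (hf hab) ((hp b a).1 hba)
  have hc := h (hf hcd) ((hp d c).1 hdc)
  exact hac (hf.injective (Fin.ext (ha.trans hc.symm)))

theorem isFishburn (h : HasInversionsOnlyAt π i) : IsFishburn π := by
  rintro ⟨a, b, hab, hb, has, hba, -⟩
  have ha := h (show (⟨a, by omega⟩ : Fin n) < ⟨b, hb⟩ from Fin.mk_lt_mk.2 (by omega)) hba
  have hs := h (show (⟨a + 1, by omega⟩ : Fin n) < ⟨b, hb⟩ from Fin.mk_lt_mk.2 hab)
    (hba.trans has)
  simp only at ha hs
  omega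

theorem isFishburn_and_avoids (h : HasInversionsOnlyAt π i) :
    IsFishburn π ∧ Avoids π ![3, 2, 1] ∧ Avoids π ![3, 1, 4, 2] ∧ Avoids π ![2, 1, 4, 3] :=
  ⟨h.isFishburn,
    h.avoids (a := 0) (b := 1) (c := 1) (d := 2) (by decide) (by decide) (by decide) (by decide)
      (by decide),
    h.avoids (a := 0) (b := 1) (c := 2) (d := 3) (by decide) (by decide) (by decide) (by decide)
      (by decide),
    h.avoids (a := 0) (b := 1) (c := 2) (d := 3) (by decide) (by decide) (by decide) (by decide)
      (by decide)⟩

theorem filter_apply_lt_eq {i m : Fin n} (h : HasInversionsOnlyAt π i) (hm : m ≠ i) :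
    ({k | π k < π m} : Finset (Fin n)) = if i < m ∧ π m < π i then (Iio m).erase i else Iio m := by
  ext k
  have hk : π k < π m ↔ k < m ∧ ¬ (k = i ∧ π m < π i) := by
    constructor
    · intro hkm
      refine ⟨lt_of_not_ge fun hmk => ?_, ?_⟩
      · exact hm (Fin.ext (h (lt_of_le_of_ne hmk (by rintro rfl; exact hkm.false)) hkm))
      · rintro ⟨rfl, hmk⟩
        exact hkm.not_gt hmk
    · rintro ⟨hkm, hki⟩
      refine lt_of_le_of_ne (le_of_not_gt fun hmk => hki ⟨Fin.ext (h hkm hmk), ?_⟩) ?_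
      · obtain rfl := Fin.ext (h hkm hmk); exact hmk
      · exact π.injective.ne hkm.ne
  rw [mem_filter_univ, hk]
  split_ifs with hc
  · simp [hc.2, and_comm]
  · simp only [mem_Iio, and_iff_left_iff_imp]
    rintro hkm ⟨rfl, hmk⟩
    exact hc ⟨hkm, hmk⟩

theorem apply_eq {i m : Fin n} (h : HasInversionsOnlyAt π i) (hm : m ≠ i) :
    (π m : ℕ) = if i < m ∧ π m < π i then (m : ℕ) - 1 else m := by
  rw [← π.card_filter_apply_lt, h.filter_apply_lt_eq hm]
  split_ifs with hc
  · rw [card_erase_of_mem (mem_Iio.2 hc.1), Fin.card_Iio]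
  · exact Fin.card_Iio m

theorem eq_inv_cycleIcc {i : Fin n} (h : HasInversionsOnlyAt π i) (hi : i < π i) :
    π = (Fin.cycleIcc i (π i))⁻¹ := by
  refine eq_inv_of_mul_eq_one_right (Perm.ext fun m => Fin.ext ?_)
  rw [Perm.mul_apply, Fin.val_cycleIcc hi, Perm.one_apply]
  rcases eq_or_ne m i with rfl | hm
  · simp
  have hπm := h.apply_eq hm
  have hne : π m ≠ π i := π.injective.ne hm
  split_ifs at hπm ⊢ <;> omega

end HasInversionsOnlyAt

section FirstMovedPoint

variable {π : Perm (Fin n)} {i : Fin n}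

theorem le_apply_iff_of_forall_lt (hfix : ∀ k < i, π k = k) {k : Fin n} : i ≤ π k ↔ i ≤ k := by
  refine ⟨fun h => le_of_not_gt fun hk => ?_, fun h => le_of_not_gt fun hk => ?_⟩
  · exact (hfix k hk ▸ h).not_gt hk
  · exact (π.injective (hfix _ hk) ▸ hk).not_ge h

theorem val_symm_apply_eq_add_one (hF : IsFishburn π) (h321 : Avoids π ![3, 2, 1])
    (hfix : ∀ k < i, π k = k) (hi : i < π i) :
    (π.symm i : ℕ) = i + 1 := by
  generalize hr : π.symm i = r
  rw [π.symm_apply_eq, eq_comm] at hr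
  have hir : i < r := lt_of_le_of_ne ((le_apply_iff_of_forall_lt hfix).1 hr.ge)
    (by rintro rfl; exact hi.ne' hr)
  by_contra hne
  obtain ⟨s, hs⟩ : ∃ s : Fin n, (s : ℕ) = i + 1 := ⟨⟨i + 1, by omega⟩, rfl⟩
  have his : i < s := by omega
  have hsr : s < r := by omega
  have hπs : i < π s := lt_of_le_of_ne ((le_apply_iff_of_forall_lt hfix).2 his.le)
    fun h => hsr.ne (π.injective (h.symm.trans hr.symm))
  rcases lt_or_gt_of_ne (π.injective.ne his.ne') with hsi | hsi
  · exact h321 (contains_321 his hsr (hr ▸ hπs) hsi)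
  -- the value `π i - 1` lies to the right of `s`, which makes `i, s` the start of a bad 231
  obtain ⟨t, ht⟩ : ∃ t, (π t : ℕ) + 1 = π i :=
    ⟨π.symm ⟨π i - 1, by omega⟩, by simp only [apply_symm_apply]; omega⟩
  have hit : i ≤ t := (le_apply_iff_of_forall_lt hfix).1 (by omega)
  have hti : t ≠ i := by rintro rfl; omega
  have hts : t ≠ s := by rintro rfl; omega
  exact hF.apply_ne_apply_add_one hs (by omega) hsi (by omega) ht.symm

theorem hasInversionsOnlyAt_of_avoids (h321 : Avoids π ![3, 2, 1])
    (h3142 : Avoids π ![3, 1, 4, 2]) (h2143 : Avoids π ![2, 1, 4, 3])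
    (hfix : ∀ k < i, π k = k) (hi : i < π i) {s : Fin n} (hs : (s : ℕ) = i + 1) (hπs : π s = i) :
    HasInversionsOnlyAt π i := by
  intro p q hpq hqp
  by_contra hpi
  have hip : i < p := by
    refine lt_of_not_ge fun hpi' => ?_
    have hp := hfix p (by omega)
    have hq : ¬ i ≤ q := fun hq => by
      have := (le_apply_iff_of_forall_lt hfix).2 hq
      omega
    have := hfix q (by omega)
    omega
  have hiq : i < q := hip.trans hpq
  have his : i < s := by omega
  have hπq : i < π q := lt_of_le_of_ne ((le_apply_iff_of_forall_lt hfix).2 hiq.le)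
    fun h => by have := π.injective (hπs.trans h); omega
  have hsp : s < p := by
    have : p ≠ s := by rintro rfl; omega
    omega
  rcases lt_or_gt_of_ne (π.injective.ne hip.ne') with hpi' | hpi'
  · exact h321 (contains_321 hip hpq hqp hpi')
  rcases lt_or_gt_of_ne (π.injective.ne hiq.ne') with hqi | hqi
  · exact h3142 (contains_3142 his hsp hpq (hπs ▸ hπq) hqi hpi')
  · exact h2143 (contains_2143 his hsp hpq (hπs ▸ hi) hqi hqp)

end FirstMovedPoint

theorem exists_hasInversionsOnlyAt {π : Perm (Fin n)} (hF : IsFishburn π)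
    (h321 : Avoids π ![3, 2, 1]) (h3142 : Avoids π ![3, 1, 4, 2]) (h2143 : Avoids π ![2, 1, 4, 3])
    (hπ : π ≠ 1) : ∃ i, i < π i ∧ HasInversionsOnlyAt π i := by
  have hmoved : {k | π k ≠ k}.Nonempty := by
    by_contra! h
    exact hπ (Perm.ext fun k => by_contra fun hk => h.subset hk)
  obtain ⟨i, hi, hmin⟩ := wellFounded_lt.has_min _ hmoved
  have hfix : ∀ k < i, π k = k := fun k hk => by_contra fun h => hmin k h hk
  have hi' : i < π i := lt_of_le_of_ne ((le_apply_iff_of_forall_lt hfix).2 le_rfl) (Ne.symm hi)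
  exact ⟨i, hi', hasInversionsOnlyAt_of_avoids h321 h3142 h2143 hfix hi'
    (val_symm_apply_eq_add_one hF h321 hfix hi') (π.apply_symm_apply i)⟩

theorem setOf_isFishburn_and_avoids_eq :
    {π : Perm (Fin n) | IsFishburn π ∧ Avoids π ![3, 2, 1] ∧ Avoids π ![3, 1, 4, 2] ∧
      Avoids π ![2, 1, 4, 3]} =
      ↑(insert 1 (({p : Fin n × Fin n | p.1 < p.2} : Finset _).image
        fun p => (Fin.cycleIcc p.1 p.2)⁻¹)) := by
  ext π
  simp only [Set.mem_ofPred_eq, coe_insert, coe_image, coe_filter, mem_univ, true_and,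
    Set.mem_insert_iff, Set.mem_image, Prod.exists]
  constructor
  · rintro ⟨hF, h321, h3142, h2143⟩
    refine or_iff_not_imp_left.2 fun hπ => ?_
    obtain ⟨i, hi, h⟩ := exists_hasInversionsOnlyAt hF h321 h3142 h2143 hπ
    exact ⟨i, π i, hi, (h.eq_inv_cycleIcc hi).symm⟩
  · rintro (rfl | ⟨i, j, hij, rfl⟩)
    · exact (hasInversionsOnlyAt_one 0).isFishburn_and_avoids
    · exact (hasInversionsOnlyAt_inv_cycleIcc hij).isFishburn_and_avoids

theorem fishburn_321_3142_2143 (n : ℕ) :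
    {π : Equiv.Perm (Fin n) | IsFishburn π ∧ Avoids π ![3, 2, 1] ∧ Avoids π ![3, 1, 4, 2] ∧ Avoids π ![2, 1, 4, 3]}.ncard = n.choose 2 + 1 := by
  rw [setOf_isFishburn_and_avoids_eq, Set.ncard_coe_finset, card_insert_of_notMem,
    card_image_of_injOn, Fintype.card_product_filter_lt, Fintype.card_fin]
  · simp only [coe_filter, mem_univ, true_and]
    exact inv_injective.comp_injOn Fin.cycleIcc_injOn
  · simp only [mem_image, mem_filter_univ, Prod.exists, not_exists, not_and, inv_eq_one]
    exact fun i j hij => Fin.cycleIcc_ne_one hij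
end

section
/- For n ≥ 0, the number of Fishburn permutations of length n avoiding the classical patterns 321, 2143, and 3124 equals C(n,2) + 1. -/
/-!
The permutations in question are the identity and, for each pair `i < v < n`, one permutation
`permOfPair`. Let `π ≠ 1` be one of them, `i` its first moved point and `v = π i`, so `v > i`.
Then `π (i+1) = i`: otherwise the value `i` sits further right, and `i < π (i+1) < v` gives a
321, while `π (i+1) > v` gives a forbidden Fishburn 231 with the later value `v - 1`. After
position `i+1` the values below `v` increase (321 with `π i`), those above `v` increase
(2143 with `π i, π (i+1)`), and every value above `v` precedes every value below `v`
(3124 with `π i, π (i+1)`). This determines `π` from `(i, v)`, and there are `C(n,2)` such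
pairs.
-/

open Equiv

/-- `π` in one-line notation, extended by the identity beyond `n`: a bijection of `ℕ`, so that
positions and values can be handled by linear arithmetic without bound proofs. -/
def oneLine {n : ℕ} (π : Perm (Fin n)) (t : ℕ) : ℕ :=
  if h : t < n then π ⟨t, h⟩ else t

section OneLine

variable {n : ℕ} (π σ : Perm (Fin n))

lemma oneLine_of_lt {t : ℕ} (h : t < n) : oneLine π t = π ⟨t, h⟩ := dif_pos h

lemma oneLine_of_le {t : ℕ} (h : n ≤ t) : oneLine π t = t := dif_neg (by omega)

lemma oneLine_lt_iff {t : ℕ} : oneLine π t < n ↔ t < n := by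
  by_cases h : t < n
  · simp [oneLine_of_lt π h, h]
  · simp [oneLine_of_le π (not_lt.mp h), h]

@[simp]
lemma oneLine_one : oneLine (1 : Perm (Fin n)) = id := by
  funext t
  by_cases h : t < n
  · simp [oneLine_of_lt _ h]
  · simp [oneLine_of_le _ (not_lt.mp h)]

lemma oneLine_mul : oneLine (π * σ) = oneLine π ∘ oneLine σ := by
  funext t
  by_cases h : t < n
  · simp [oneLine_of_lt _ h, oneLine_of_lt _ (σ ⟨t, h⟩).2]
  · simp [oneLine_of_le _ (not_lt.mp h)]

@[simp]
lemma oneLine_inv_oneLine (t : ℕ) : oneLine π⁻¹ (oneLine π t) = t := by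
  rw [← Function.comp_apply (f := oneLine π⁻¹), ← oneLine_mul, inv_mul_cancel, oneLine_one, id]

@[simp]
lemma oneLine_oneLine_inv (t : ℕ) : oneLine π (oneLine π⁻¹ t) = t := by
  simpa using oneLine_inv_oneLine π⁻¹ t

@[simp]
lemma oneLine_inj {a b : ℕ} : oneLine π a = oneLine π b ↔ a = b :=
  (Function.LeftInverse.injective (oneLine_inv_oneLine π)).eq_iff

lemma oneLine_injective : Function.Injective (oneLine (n := n)) := by
  intro π σ h
  ext t
  simpa [oneLine_of_lt _ t.2] using congrFun h t

end OneLine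

section Patterns

variable {n : ℕ} (π : Perm (Fin n))

lemma isFishburn_iff : IsFishburn π ↔ ∀ a j, a + 1 < j → j < n →
    oneLine π a < oneLine π (a + 1) → oneLine π j < oneLine π a →
    oneLine π a ≠ oneLine π j + 1 := by
  simp only [IsFishburn, not_exists, not_and]
  refine forall₄_congr fun a j haj hj => ?_
  rw [oneLine_of_lt π (by omega : a < n), oneLine_of_lt π (by omega : a + 1 < n),
    oneLine_of_lt π hj, Fin.lt_def, Fin.lt_def]

lemma contains_iff_exists_nat {k : ℕ} (p : Fin k → ℕ) :
    Contains π p ↔ ∃ f : Fin k → ℕ, StrictMono f ∧ (∀ i, f i < n) ∧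
      ∀ i j, p i < p j ↔ oneLine π (f i) < oneLine π (f j) := by
  constructor
  · rintro ⟨f, hf, hp⟩
    refine ⟨fun i => f i, fun i j h => hf h, fun i => (f i).2, fun i j => ?_⟩
    simp only [oneLine_of_lt π (f _).2, Fin.eta, hp, Fin.lt_def]
  · rintro ⟨f, hf, hlt, hp⟩
    refine ⟨fun i => ⟨f i, hlt i⟩, fun i j h => hf h, fun i j => ?_⟩
    rw [hp, oneLine_of_lt π (hlt i), oneLine_of_lt π (hlt j), Fin.lt_def]

lemma contains_321_iff : Contains π ![3, 2, 1] ↔ ∃ a b c, a < b ∧ b < c ∧ c < n ∧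
    oneLine π b < oneLine π a ∧ oneLine π c < oneLine π b := by
  rw [contains_iff_exists_nat]
  conv_lhs => simp [Fin.exists_fin_succ_pi, Fin.forall_fin_succ, Fin.strictMono_iff_lt_succ]
  exact exists₃_congr fun a b c => by omega

lemma contains_2143_iff : Contains π ![2, 1, 4, 3] ↔ ∃ a b c d, a < b ∧ b < c ∧ c < d ∧ d < n ∧
    oneLine π b < oneLine π a ∧ oneLine π a < oneLine π d ∧ oneLine π d < oneLine π c := by
  rw [contains_iff_exists_nat]
  conv_lhs => simp [Fin.exists_fin_succ_pi, Fin.forall_fin_succ, Fin.strictMono_iff_lt_succ]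
  exact exists₄_congr fun a b c d => by omega

lemma contains_3124_iff : Contains π ![3, 1, 2, 4] ↔ ∃ a b c d, a < b ∧ b < c ∧ c < d ∧ d < n ∧
    oneLine π b < oneLine π c ∧ oneLine π c < oneLine π a ∧ oneLine π a < oneLine π d := by
  rw [contains_iff_exists_nat]
  conv_lhs => simp [Fin.exists_fin_succ_pi, Fin.forall_fin_succ, Fin.strictMono_iff_lt_succ]
  exact exists₄_congr fun a b c d => by omega

end Patterns

def fishburnAvoiders (n : ℕ) : Set (Perm (Fin n)) :=
  {π | IsFishburn π ∧ Avoids π ![3, 2, 1] ∧ Avoids π ![2, 1, 4, 3] ∧ Avoids π ![3, 1, 2, 4]}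

lemma one_mem_fishburnAvoiders (n : ℕ) : 1 ∈ fishburnAvoiders n := by
  simp only [fishburnAvoiders, Set.mem_ofPred_eq, isFishburn_iff, Avoids, contains_321_iff,
    contains_2143_iff, contains_3124_iff, oneLine_one, id, not_exists, not_and]
  refine ⟨?_, ?_, ?_, ?_⟩ <;> intros <;> omega

/-- In one-line notation, `0, …, i-1, v, i, v+1, …, n-1, i+1, …, v-1`. -/
def permOfPairFun (n i v t : ℕ) : ℕ :=
  if t < i then t
  else if t = i then v
  else if t = i + 1 then i
  else if t + v < n + i + 1 then t + v - i - 1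
  else t + v - n

def permOfPairInv (n i v w : ℕ) : ℕ :=
  if w < i then w
  else if w = i then i + 1
  else if w = v then i
  else if v < w then w + i + 1 - v
  else w + n - v

section PermOfPair

lemma permOfPairInv_of_lt_of_ne {n i v w : ℕ} (hiw : i < w) (hwv : w ≠ v) :
    permOfPairInv n i v w = if v < w then w + i + 1 - v else w + n - v := by
  simp only [permOfPairInv]
  split_ifs <;> omega

variable {n i v : ℕ} (hiv : i < v) (hvn : v < n)

def permOfPair : Perm (Fin n) where
  toFun t := ⟨permOfPairFun n i v t, by
    have := t.2; simp only [permOfPairFun]; split_ifs <;> omega⟩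
  invFun w := ⟨permOfPairInv n i v w, by
    have := w.2; simp only [permOfPairInv]; split_ifs <;> omega⟩
  left_inv t := by have := t.2; ext; simp only [permOfPairFun, permOfPairInv]; split_ifs <;> omega
  right_inv w := by have := w.2; ext; simp only [permOfPairFun, permOfPairInv]; split_ifs <;> omega

lemma oneLine_permOfPair {t : ℕ} (ht : t < n) :
    oneLine (permOfPair hiv hvn) t = permOfPairFun n i v t :=
  oneLine_of_lt _ ht

lemma oneLine_permOfPair_inv {w : ℕ} (hw : w < n) :
    oneLine (permOfPair hiv hvn)⁻¹ w = permOfPairInv n i v w :=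
  oneLine_of_lt _ hw

lemma oneLine_permOfPair_cases {t : ℕ} (ht : t < n) :
    (t < i ∧ oneLine (permOfPair hiv hvn) t = t) ∨
    (t = i ∧ oneLine (permOfPair hiv hvn) t = v) ∨
    (t = i + 1 ∧ oneLine (permOfPair hiv hvn) t = i) ∨
    (i + 2 ≤ t ∧ t + v < n + i + 1 ∧ oneLine (permOfPair hiv hvn) t = t + v - i - 1) ∨
    (n + i + 1 ≤ t + v ∧ oneLine (permOfPair hiv hvn) t = t + v - n) := by
  rw [oneLine_permOfPair hiv hvn ht, permOfPairFun]
  split_ifs <;> omega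

lemma permOfPair_mem_fishburnAvoiders : permOfPair hiv hvn ∈ fishburnAvoiders n := by
  simp only [fishburnAvoiders, Set.mem_ofPred_eq, isFishburn_iff, Avoids, contains_321_iff,
    contains_2143_iff, contains_3124_iff, not_exists, not_and]
  refine ⟨fun a j _ hj => ?_, fun a b c _ _ hc => ?_, fun a b c d _ _ _ hd => ?_,
    fun a b c d _ _ _ hd => ?_⟩
  · have := oneLine_permOfPair_cases hiv hvn (t := a) (by omega)
    have := oneLine_permOfPair_cases hiv hvn (t := a + 1) (by omega)
    have := oneLine_permOfPair_cases hiv hvn hj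
    omega
  · have := oneLine_permOfPair_cases hiv hvn (t := a) (by omega)
    have := oneLine_permOfPair_cases hiv hvn (t := b) (by omega)
    have := oneLine_permOfPair_cases hiv hvn hc
    omega
  all_goals
    have := oneLine_permOfPair_cases hiv hvn (t := a) (by omega)
    have := oneLine_permOfPair_cases hiv hvn (t := b) (by omega)
    have := oneLine_permOfPair_cases hiv hvn (t := c) (by omega)
    have := oneLine_permOfPair_cases hiv hvn hd
    omega

end PermOfPair

lemma eq_self_of_strictMonoOn_Ico {f : ℕ → ℕ} {m n : ℕ} (hmono : StrictMonoOn f (Set.Ico m n))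
    (hmaps : Set.MapsTo f (Set.Ico m n) (Set.Ico m n)) {t : ℕ} (ht : t ∈ Set.Ico m n) :
    f t = t := by
  obtain ⟨hmt, htn⟩ := ht
  have hbelow : (Finset.Ico m t).card ≤ (Finset.Ico m (f t)).card := by
    refine Finset.card_le_card_of_injOn f (fun s hs => ?_) (hmono.injOn.mono fun s hs => ?_)
    · simp only [Finset.coe_Ico, Set.mem_Ico] at hs ⊢
      exact ⟨(hmaps ⟨hs.1, by omega⟩).1, hmono ⟨hs.1, by omega⟩ ⟨hmt, htn⟩ hs.2⟩
    · simp only [Finset.coe_Ico, Set.mem_Ico] at hs ⊢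
      omega
  have habove : (Finset.Ioo t n).card ≤ (Finset.Ioo (f t) n).card := by
    refine Finset.card_le_card_of_injOn f (fun s hs => ?_) (hmono.injOn.mono fun s hs => ?_)
    · simp only [Finset.coe_Ioo, Set.mem_Ioo] at hs ⊢
      exact ⟨hmono ⟨hmt, htn⟩ ⟨by omega, hs.2⟩ hs.1, (hmaps ⟨by omega, hs.2⟩).2⟩
    · simp only [Finset.coe_Ioo, Set.mem_Ioo, Set.mem_Ico] at hs ⊢
      omega
  simp only [Nat.card_Ico, Nat.card_Ioo] at hbelow habove
  have := hmaps ⟨hmt, htn⟩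
  simp only [Set.mem_Ico] at this
  omega

section Characterization

variable {n : ℕ} {π : Perm (Fin n)}

lemma le_oneLine_of_forall_lt {m a : ℕ} (hfix : ∀ t < m, oneLine π t = t) (ha : m ≤ a) :
    m ≤ oneLine π a := by
  by_contra! h
  have := hfix _ h
  rw [oneLine_inj] at this
  omega

lemma exists_first_moved (hπ : π ≠ 1) :
    ∃ i, (∀ t < i, oneLine π t = t) ∧ i < oneLine π i ∧ oneLine π i < n := by
  classical
  have hex : ∃ t, oneLine π t ≠ t := by
    by_contra! h
    exact hπ (oneLine_injective (funext fun t => by simp [h t]))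
  have hfix : ∀ t < Nat.find hex, oneLine π t = t := fun t ht => not_not.mp (Nat.find_min hex ht)
  refine ⟨Nat.find hex, hfix,
    (le_oneLine_of_forall_lt hfix le_rfl).lt_of_ne' (Nat.find_spec hex), ?_⟩
  by_contra h
  exact Nat.find_spec hex (oneLine_of_le π (not_lt.mp ((oneLine_lt_iff π).not.mp h)))

variable {i v : ℕ}

lemma oneLine_succ_eq (hF : IsFishburn π) (h321 : Avoids π ![3, 2, 1])
    (hfix : ∀ t < i, oneLine π t = t) (hiv : i < v) (hvn : v < n) (hπi : oneLine π i = v) :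
    oneLine π (i + 1) = i := by
  rw [isFishburn_iff] at hF
  simp only [Avoids, contains_321_iff, not_exists, not_and] at h321
  have hge : i ≤ oneLine π (i + 1) := le_oneLine_of_forall_lt hfix (by omega)
  have hne : oneLine π (i + 1) ≠ v := by rw [← hπi]; simp
  have hlater : ∀ w, i ≤ w → w < n → w ≠ v → w ≠ oneLine π (i + 1) →
      ∃ p, i + 2 ≤ p ∧ p < n ∧ oneLine π p = w := fun w hiw hwn hwv hw => by
    obtain ⟨p, hp⟩ : ∃ p, oneLine π p = w := ⟨_, oneLine_oneLine_inv π w⟩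
    refine ⟨p, ?_, by rwa [← oneLine_lt_iff π, hp], hp⟩
    have : p ≠ i := by rintro rfl; omega
    have : p ≠ i + 1 := by rintro rfl; omega
    have : ¬p < i := fun h => by have := hfix p h; omega
    omega
  by_contra hne'
  obtain ⟨p, hp, hpn, hPp⟩ := hlater i le_rfl (by omega) (by omega) (Ne.symm hne')
  rcases lt_or_gt_of_ne hne with hlt | hgt
  · exact h321 i (i + 1) p (by omega) (by omega) hpn (by omega) (by omega)
  · obtain ⟨q, hq, hqn, hPq⟩ := hlater (v - 1) (by omega) (by omega) (by omega) (by omega)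
    exact hF i q (by omega) hqn (by omega) (by omega) (by omega)

lemma lt_oneLine_and_ne_of_add_two_le (hfix : ∀ t < i, oneLine π t = t) (hπi : oneLine π i = v)
    (hsucc : oneLine π (i + 1) = i) {a : ℕ} (ha : i + 2 ≤ a) :
    i < oneLine π a ∧ oneLine π a ≠ v := by
  have := le_oneLine_of_forall_lt hfix (show i ≤ a by omega)
  have : oneLine π a ≠ i := by rw [← hsucc, Ne, oneLine_inj]; omega
  have : oneLine π a ≠ v := by rw [← hπi, Ne, oneLine_inj]; omega
  omega

-- Among the values `> i` other than `v`, `permOfPairInv` ranks those above `v` first.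
lemma permOfPairInv_oneLine_strictMonoOn (h321 : Avoids π ![3, 2, 1])
    (h2143 : Avoids π ![2, 1, 4, 3]) (h3124 : Avoids π ![3, 1, 2, 4])
    (hfix : ∀ t < i, oneLine π t = t) (hiv : i < v) (hvn : v < n) (hπi : oneLine π i = v)
    (hsucc : oneLine π (i + 1) = i) :
    StrictMonoOn (fun t => permOfPairInv n i v (oneLine π t)) (Set.Ico (i + 2) n) := by
  simp only [Avoids, contains_321_iff, contains_2143_iff, contains_3124_iff, not_exists,
    not_and] at h321 h2143 h3124
  rintro a ⟨ha, han⟩ b ⟨hb, hbn⟩ hab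
  obtain ⟨hia, hav⟩ := lt_oneLine_and_ne_of_add_two_le hfix hπi hsucc ha
  obtain ⟨hib, hbv⟩ := lt_oneLine_and_ne_of_add_two_le hfix hπi hsucc hb
  have hne : oneLine π a ≠ oneLine π b := by rw [Ne, oneLine_inj]; omega
  have han' := (oneLine_lt_iff π).mpr han
  have hbn' := (oneLine_lt_iff π).mpr hbn
  have below := h321 i a b (by omega) hab hbn
  have above := h2143 i (i + 1) a b (by omega) (by omega) hab hbn
  have cross := h3124 i (i + 1) a b (by omega) (by omega) hab hbn
  simp only [hπi, hsucc] at below above cross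
  simp only [permOfPairInv_of_lt_of_ne hia hav, permOfPairInv_of_lt_of_ne hib hbv]
  split_ifs <;> omega

lemma eq_permOfPair (hF : IsFishburn π) (h321 : Avoids π ![3, 2, 1])
    (h2143 : Avoids π ![2, 1, 4, 3]) (h3124 : Avoids π ![3, 1, 2, 4])
    (hfix : ∀ t < i, oneLine π t = t) (hiv : i < v) (hvn : v < n) (hπi : oneLine π i = v) :
    π = permOfPair hiv hvn := by
  have hsucc := oneLine_succ_eq hF h321 hfix hiv hvn hπi
  have hmono := permOfPairInv_oneLine_strictMonoOn h321 h2143 h3124 hfix hiv hvn hπi hsucc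
  have hmaps : Set.MapsTo (fun t => permOfPairInv n i v (oneLine π t)) (Set.Ico (i + 2) n)
      (Set.Ico (i + 2) n) := by
    rintro a ⟨ha, han⟩
    obtain ⟨hia, hav⟩ := lt_oneLine_and_ne_of_add_two_le hfix hπi hsucc ha
    have := (oneLine_lt_iff π).mpr han
    simp only [Set.mem_Ico, permOfPairInv_of_lt_of_ne hia hav]
    split_ifs <;> omega
  apply oneLine_injective
  funext t
  rcases lt_or_ge t n with htn | htn
  · have hσ := oneLine_permOfPair_cases hiv hvn htn
    obtain hti | rfl | rfl | hti : t < i ∨ t = i ∨ t = i + 1 ∨ i + 2 ≤ t := by omega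
    · have := hfix t hti
      omega
    · omega
    · omega
    · have hkey : permOfPairInv n i v (oneLine π t) = t :=
        eq_self_of_strictMonoOn_Ico hmono hmaps ⟨hti, htn⟩
      calc oneLine π t
          = oneLine (permOfPair hiv hvn) (oneLine (permOfPair hiv hvn)⁻¹ (oneLine π t)) := by simp
        _ = oneLine (permOfPair hiv hvn) t := by
          rw [oneLine_permOfPair_inv hiv hvn ((oneLine_lt_iff π).mpr htn), hkey]
  · rw [oneLine_of_le _ htn, oneLine_of_le _ htn]

end Characterization

section Classification

variable {n : ℕ}

lemma permOfPair_ne_one {i v : ℕ} (hiv : i < v) (hvn : v < n) : permOfPair hiv hvn ≠ 1 := by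
  intro h
  have h1 := congrFun (congrArg oneLine h) i
  have h2 := oneLine_permOfPair_cases hiv hvn (t := i) (by omega)
  simp only [oneLine_one, id] at h1
  omega

lemma permOfPair_inj {i v i' v' : ℕ} (hiv : i < v) (hvn : v < n) (hiv' : i' < v')
    (hvn' : v' < n) (h : permOfPair hiv hvn = permOfPair hiv' hvn') : i = i' ∧ v = v' := by
  have e := congrFun (congrArg oneLine h) i
  have e' := congrFun (congrArg oneLine h) i'
  have := oneLine_permOfPair_cases hiv hvn (t := i) (by omega)
  have := oneLine_permOfPair_cases hiv hvn (t := i') (by omega)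
  have := oneLine_permOfPair_cases hiv' hvn' (t := i) (by omega)
  have := oneLine_permOfPair_cases hiv' hvn' (t := i') (by omega)
  omega

def permOfFinPair (q : {q : Fin n × Fin n // q.1 < q.2}) : Perm (Fin n) :=
  permOfPair (Fin.lt_def.mp q.2) q.1.2.2

lemma permOfFinPair_injective : Function.Injective (permOfFinPair (n := n)) := by
  rintro ⟨⟨i, v⟩, hiv⟩ ⟨⟨i', v'⟩, hiv'⟩ h
  obtain ⟨hi, hv⟩ := permOfPair_inj _ _ _ _ h
  simp only [Subtype.mk.injEq, Prod.mk.injEq]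
  exact ⟨Fin.ext hi, Fin.ext hv⟩

lemma fishburnAvoiders_eq : fishburnAvoiders n = insert 1 (Set.range permOfFinPair) := by
  ext π
  constructor
  · rintro ⟨hF, h321, h2143, h3124⟩
    rcases eq_or_ne π 1 with rfl | hπ
    · exact Set.mem_insert _ _
    obtain ⟨i, hfix, hiv, hvn⟩ := exists_first_moved hπ
    refine Set.mem_insert_of_mem _ ⟨⟨(⟨i, by omega⟩, ⟨_, hvn⟩), Fin.mk_lt_mk.mpr hiv⟩, ?_⟩
    exact (eq_permOfPair hF h321 h2143 h3124 hfix hiv hvn rfl).symm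
  · rintro (rfl | ⟨q, rfl⟩)
    · exact one_mem_fishburnAvoiders n
    · exact permOfPair_mem_fishburnAvoiders _ _

end Classification

theorem fishburn_321_2143_3124 (n : ℕ) :
    {π : Equiv.Perm (Fin n) | IsFishburn π ∧ Avoids π ![3, 2, 1] ∧ Avoids π ![2, 1, 4, 3] ∧ Avoids π ![3, 1, 2, 4]}.ncard = n.choose 2 + 1 := by
  change (fishburnAvoiders n).ncard = _
  rw [fishburnAvoiders_eq, Set.ncard_insert_of_notMem, Set.ncard_range_of_injective
    permOfFinPair_injective, Nat.card_eq_fintype_card, Fintype.card_subtype,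
    Fintype.card_product_filter_lt, Fintype.card_fin]
  rintro ⟨q, hq⟩
  exact permOfPair_ne_one _ _ hq
end
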